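/- arXiv:dg-ga/9707015 — 2 statements merged into one kernel-verified Lean document; each statement's English description precedes it below -/
import Mathlib

section
/- Global support paraboloids from local lower support functions (Lemma 2.16). Let Ω ⊆ ℝⁿ be a convex open set, let v : Ω → ℝ be continuous, and let C ∈ ℝ. Assume v satisfies D²v ≥ −C·I in the sense of support functions: for every x ∈ Ω there is a C² lower support function φ for v at x with D²φ ≥ −C·I on a neighborhood of x. Then for each x₀ ∈ Ω there is a vector a ∈ ℝⁿ such that v(x) ≥ v(x₀) + ⟨x − x₀, a⟩ − (C/2)‖x − x₀‖² for all x ∈ Ω. Moreover, if v is differentiable at x₀ then a = Dv(x₀). -/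
open scoped RealInnerProductSpace

noncomputable section

abbrev Euc (n : ℕ) := EuclideanSpace ℝ (Fin n)

/-- Second partial derivative `D_{ij}u`. -/
def pd2 (n : ℕ) (i j : Fin n) (u : Euc n → ℝ) (x : Euc n) : ℝ :=
  fderiv ℝ (fun y => fderiv ℝ u y (EuclideanSpace.single j 1)) x (EuclideanSpace.single i 1)

/-- Hessian matrix `D²u`. -/
def hessM (n : ℕ) (u : Euc n → ℝ) (x : Euc n) : Matrix (Fin n) (Fin n) ℝ :=
  Matrix.of fun i j => pd2 n i j u x

/-!
Fix `x ∈ Ω` and put `g s = v (x₀ + s • (x - x₀)) + C / 2 * s ^ 2 * ‖x - x₀‖ ^ 2` on `[0, 1]`.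
By Taylor's formula with the bound `D²φ ≥ -C • I`, each local support function `φ` at a point
`z` gives `v y ≥ v z + Dφ(z) (y - z) - C / 2 * ‖y - z‖ ^ 2` near `z`, so `g` has a supporting
line at every point of `[0, 1]`, locally. A continuous function on an interval with local
supporting lines everywhere lies below its chords: at the rightmost maximum of `g` minus a chord
the supporting slope can be neither `≥ 0` nor `< 0`. Hence, for a support function `φ₀` at
`x₀`, the supporting slope `Dφ₀(x₀) (x - x₀)` of `g` at `0` is at most `g 1 - g 0`, which is
the claimed inequality with `a = ∇φ₀(x₀)`. If `v` is differentiable at `x₀`, then `v - φ₀` has a local minimum there, so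
`Dv(x₀) = Dφ₀(x₀)`.
-/

open Set Filter Topology Matrix

def IsLocalSupportSlope (f : ℝ → ℝ) (s : Set ℝ) (t m : ℝ) : Prop :=
  ∀ᶠ r in 𝓝[s] t, f t + m * (r - t) ≤ f r

namespace IsLocalSupportSlope

variable {f : ℝ → ℝ} {s : Set ℝ} {a b t m : ℝ}

theorem add_affine (hf : IsLocalSupportSlope f s t m) (c e : ℝ) :
    IsLocalSupportSlope (fun r ↦ f r + (c * r + e)) s t (m + c) :=
  hf.mono fun r hr ↦ by linear_combination hr

theorem exists_right (hf : IsLocalSupportSlope f (Icc a b) t m) (ht : t ∈ Ico a b) :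
    ∃ r ∈ Ioc t b, f t + m * (r - t) ≤ f r := by
  have := left_nhdsWithin_Ioo_neBot ht.2
  have hle : 𝓝[Ioo t b] t ≤ 𝓝[Icc a b] t :=
    nhdsWithin_mono _ fun r hr ↦ ⟨ht.1.trans hr.1.le, hr.2.le⟩
  obtain ⟨r, hfr, hr⟩ := ((hf.filter_mono hle).and self_mem_nhdsWithin).exists
  exact ⟨r, Ioo_subset_Ioc_self hr, hfr⟩

theorem exists_left (hf : IsLocalSupportSlope f (Icc a b) t m) (ht : t ∈ Ioc a b) :
    ∃ r ∈ Ico a t, f t + m * (r - t) ≤ f r := by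
  have := right_nhdsWithin_Ioo_neBot ht.1
  have hle : 𝓝[Ioo a t] t ≤ 𝓝[Icc a b] t :=
    nhdsWithin_mono _ fun r hr ↦ ⟨hr.1.le, hr.2.le.trans ht.2⟩
  obtain ⟨r, hfr, hr⟩ := ((hf.filter_mono hle).and self_mem_nhdsWithin).exists
  exact ⟨r, Ioo_subset_Ico_self hr, hfr⟩

theorem nonpos_of_isMaxOn (hf : IsLocalSupportSlope f (Icc a b) a m) (hab : a < b)
    (hmax : IsMaxOn f (Icc a b) a) : m ≤ 0 := by
  obtain ⟨r, hr, hfr⟩ := hf.exists_right ⟨le_rfl, hab⟩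
  have : f r ≤ f a := hmax ⟨hr.1.le, hr.2⟩
  nlinarith [hr.1]

end IsLocalSupportSlope

theorem nonpos_of_forall_isLocalSupportSlope {h : ℝ → ℝ} {a b : ℝ}
    (hc : ContinuousOn h (Icc a b)) (ha : h a ≤ 0) (hb : h b ≤ 0)
    (hs : ∀ t ∈ Icc a b, ∃ m, IsLocalSupportSlope h (Icc a b) t m) :
    ∀ t ∈ Icc a b, h t ≤ 0 := by
  by_contra! hpos
  obtain ⟨t₀, ht₀, ht₀pos⟩ := hpos
  obtain ⟨u, hu, hmax⟩ := isCompact_Icc.exists_isMaxOn ⟨t₀, ht₀⟩ hc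
  set K := Icc a b ∩ h ⁻¹' {h u}
  have hKbdd : BddAbove K := bddAbove_Icc.mono inter_subset_left
  have hTK : sSup K ∈ K :=
    (hc.preimage_isClosed_of_isClosed isClosed_Icc isClosed_singleton).csSup_mem ⟨u, hu, rfl⟩ hKbdd
  set T := sSup K
  obtain ⟨hT, hTmax⟩ : T ∈ Icc a b ∧ h T = h u := hTK
  have hMpos : 0 < h u := ht₀pos.trans_le (hmax ht₀)
  have hTa : a < T := hT.1.lt_of_ne fun haT ↦ by rw [← haT] at hTmax; linarith
  have hTb : T < b := hT.2.lt_of_ne fun hTb ↦ by rw [hTb] at hTmax; linarith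
  obtain ⟨m, hm⟩ := hs T hT
  rcases le_or_gt 0 m with hm0 | hm0
  · obtain ⟨r, hr, hhr⟩ := hm.exists_right ⟨hT.1, hTb⟩
    have hrI : r ∈ Icc a b := ⟨hTa.le.trans hr.1.le, hr.2⟩
    have hrK : r ∈ K := ⟨hrI, le_antisymm (hmax hrI) (by nlinarith [hr.1])⟩
    exact (le_csSup hKbdd hrK).not_gt hr.1
  · obtain ⟨r, hr, hhr⟩ := hm.exists_left ⟨hTa, hT.2⟩
    have : h r ≤ h u := hmax ⟨hr.1, hr.2.le.trans hT.2⟩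
    nlinarith [hr.2]

theorem IsLocalSupportSlope.le_chord_slope {g : ℝ → ℝ} {m : ℝ} (hc : ContinuousOn g (Icc 0 1))
    (hs : ∀ t ∈ Icc (0 : ℝ) 1, ∃ m, IsLocalSupportSlope g (Icc 0 1) t m)
    (h0 : IsLocalSupportSlope g (Icc 0 1) 0 m) : m ≤ g 1 - g 0 := by
  -- `g` minus its chord `r ↦ g 0 + (g 1 - g 0) * r`
  have hle : ∀ t ∈ Icc (0 : ℝ) 1, g t + ((g 0 - g 1) * t + -g 0) ≤ 0 :=
    nonpos_of_forall_isLocalSupportSlope (hc.add (by fun_prop)) (by simp) (le_of_eq (by ring))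
      fun t ht ↦ (hs t ht).elim fun _ hm ↦ ⟨_, hm.add_affine _ _⟩
  have := (h0.add_affine (g 0 - g 1) (-g 0)).nonpos_of_isMaxOn one_pos
    fun t ht ↦ by simpa using hle t ht
  linarith

theorem taylor_lower_bound_of_neg_le_deriv2 {f f' f'' : ℝ → ℝ} {a b K : ℝ} (hab : a ≤ b)
    (hf : ∀ s ∈ Icc a b, HasDerivAt f (f' s) s) (hf' : ∀ s ∈ Icc a b, HasDerivAt f' (f'' s) s)
    (hK : ∀ s ∈ Icc a b, -K ≤ f'' s) :
    f a + f' a * (b - a) - K / 2 * (b - a) ^ 2 ≤ f b := by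
  have mono : ∀ g g' : ℝ → ℝ, (∀ s ∈ Icc a b, HasDerivAt g (g' s) s) →
      (∀ s ∈ Icc a b, 0 ≤ g' s) → MonotoneOn g (Icc a b) := fun g g' hg hg' ↦
    monotoneOn_of_hasDerivWithinAt_nonneg (convex_Icc a b)
      (fun s hs ↦ (hg s hs).continuousAt.continuousWithinAt)
      (fun s hs ↦ (hg s (interior_subset hs)).hasDerivWithinAt)
      fun s hs ↦ hg' s (interior_subset hs)
  have ha : a ∈ Icc a b := left_mem_Icc.2 hab
  -- `f' + K s` is monotone, so `f - f' a s + K s² / 2` has nonnegative derivative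
  have hf'K : MonotoneOn (fun s ↦ f' s + K * s) (Icc a b) :=
    mono _ _ (fun s hs ↦ ((hf' s hs).add ((hasDerivAt_id s).const_mul K)))
      fun s hs ↦ by simp only [mul_one]; linarith [hK s hs]
  have hg := mono (fun s ↦ f s - f' a * s + K / 2 * (s - a) ^ 2) (fun s ↦ f' s - f' a + K * (s - a))
    (fun s hs ↦ (((hf s hs).sub ((hasDerivAt_id' s).const_mul (f' a))).add
        ((((hasDerivAt_id' s).sub_const a).pow 2).const_mul (K / 2))).congr_deriv (by ring))
    (fun s hs ↦ by linarith [hf'K ha hs hs.1])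
    ha (right_mem_Icc.2 hab) hab
  simp only at hg
  linarith

section SupportParaboloid

variable {E : Type*} [NormedAddCommGroup E] [NormedSpace ℝ E]

theorem ContDiffOn.differentiableAt_fderiv {F : Type*} [NormedAddCommGroup F] [NormedSpace ℝ F]
    {φ : E → F} {N : Set E} {y : E} (hφ : ContDiffOn ℝ 2 φ N) (hN : IsOpen N) (hy : y ∈ N) :
    DifferentiableAt ℝ (fderiv ℝ φ) y :=
  ((hφ.contDiffAt (hN.mem_nhds hy)).fderiv_right (m := 1) le_rfl).differentiableAt one_ne_zero

theorem ContDiffOn.eventually_taylor_lower_bound {φ : E → ℝ} {N : Set E} {C : ℝ} {z : E}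
    (hφ : ContDiffOn ℝ 2 φ N) (hN : IsOpen N) (hz : z ∈ N)
    (hD2 : ∀ y ∈ N, ∀ d, -(C * ‖d‖ ^ 2) ≤ fderiv ℝ (fderiv ℝ φ) y d d) :
    ∀ᶠ y in 𝓝 z, φ z + fderiv ℝ φ z (y - z) - C / 2 * ‖y - z‖ ^ 2 ≤ φ y := by
  obtain ⟨r, hr, hball⟩ := Metric.isOpen_iff.1 hN z hz
  filter_upwards [Metric.ball_mem_nhds z hr] with y hy
  have hseg : ∀ s ∈ Icc (0 : ℝ) 1, z + s • (y - z) ∈ N := fun s hs ↦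
    hball ((convex_ball z r).add_smul_sub_mem (Metric.mem_ball_self hr) hy hs)
  have hline : ∀ s : ℝ, HasDerivAt (fun s : ℝ ↦ z + s • (y - z)) (y - z) s := fun s ↦ by
    simpa using ((hasDerivAt_id s).smul_const (y - z)).const_add z
  have := taylor_lower_bound_of_neg_le_deriv2 zero_le_one
    (f := fun s ↦ φ (z + s • (y - z))) (f' := fun s ↦ fderiv ℝ φ (z + s • (y - z)) (y - z))
    (f'' := fun s ↦ fderiv ℝ (fderiv ℝ φ) (z + s • (y - z)) (y - z) (y - z))
    (fun s hs ↦ ((hφ.contDiffAt (hN.mem_nhds (hseg s hs))).differentiableAt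
      two_ne_zero).hasFDerivAt.comp_hasDerivAt s (hline s))
    (fun s hs ↦ (ContinuousLinearMap.apply ℝ ℝ (y - z)).hasFDerivAt.comp_hasDerivAt s
      ((hφ.differentiableAt_fderiv hN (hseg s hs)).hasFDerivAt.comp_hasDerivAt s (hline s)))
    (fun s hs ↦ hD2 _ (hseg s hs) _)
  simp only [zero_smul, add_zero, one_smul, add_sub_cancel, sub_zero, one_pow, mul_one] at this
  linarith

def IsLocalSupportParaboloid (v : E → ℝ) (Ω : Set E) (C : ℝ) (z : E) (ℓ : E →L[ℝ] ℝ) : Prop :=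
  ∀ᶠ y in 𝓝[Ω] z, v z + ℓ (y - z) - C / 2 * ‖y - z‖ ^ 2 ≤ v y

theorem IsLocalSupportParaboloid.isLocalSupportSlope_lineMap {v : E → ℝ} {Ω : Set E} {C : ℝ}
    {x d : E} {t : ℝ} {ℓ : E →L[ℝ] ℝ} {S : Set ℝ} (hv : IsLocalSupportParaboloid v Ω C (x + t • d) ℓ)
    (hS : MapsTo (fun s : ℝ ↦ x + s • d) S Ω) :
    IsLocalSupportSlope (fun s ↦ v (x + s • d) + C / 2 * s ^ 2 * ‖d‖ ^ 2) S t
      (ℓ d + C * t * ‖d‖ ^ 2) := by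
  have hL : Tendsto (fun s : ℝ ↦ x + s • d) (𝓝[S] t) (𝓝[Ω] (x + t • d)) :=
    tendsto_nhdsWithin_of_tendsto_nhds_of_eventually_within _
      ((by fun_prop : Continuous fun s : ℝ ↦ x + s • d).tendsto t |>.mono_left nhdsWithin_le_nhds)
      (eventually_nhdsWithin_of_forall hS)
  filter_upwards [hL.eventually hv] with s hs
  have hdiff : x + s • d - (x + t • d) = (s - t) • d := by rw [sub_smul]; abel
  rw [hdiff, map_smul, smul_eq_mul, norm_smul, Real.norm_eq_abs, mul_pow, sq_abs] at hs
  linear_combination hs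

theorem IsLocalSupportParaboloid.le_of_mem_convex {v : E → ℝ} {Ω : Set E} {C : ℝ} {x₀ x : E}
    {ℓ : E →L[ℝ] ℝ} (hΩ : Convex ℝ Ω) (hv : ContinuousOn v Ω)
    (hloc : ∀ z ∈ Ω, ∃ ℓ, IsLocalSupportParaboloid v Ω C z ℓ)
    (hx₀ : x₀ ∈ Ω) (hℓ : IsLocalSupportParaboloid v Ω C x₀ ℓ) (hx : x ∈ Ω) :
    v x₀ + ℓ (x - x₀) - C / 2 * ‖x - x₀‖ ^ 2 ≤ v x := by
  have hL : MapsTo (fun s : ℝ ↦ x₀ + s • (x - x₀)) (Icc 0 1) Ω :=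
    fun s hs ↦ hΩ.add_smul_sub_mem hx₀ hx hs
  have hℓ₀ : IsLocalSupportParaboloid v Ω C (x₀ + (0 : ℝ) • (x - x₀)) ℓ := by simpa using hℓ
  have := IsLocalSupportSlope.le_chord_slope
    (g := fun s ↦ v (x₀ + s • (x - x₀)) + C / 2 * s ^ 2 * ‖x - x₀‖ ^ 2)
    ((hv.comp (by fun_prop) hL).add (by fun_prop))
    (fun t ht ↦ (hloc _ (hL ht)).elim fun _ h ↦ ⟨_, h.isLocalSupportSlope_lineMap hL⟩)
    (hℓ₀.isLocalSupportSlope_lineMap hL)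
  simp only [zero_smul, one_smul, add_zero, add_sub_cancel] at this
  linarith

theorem fderiv_eq_of_eventually_le {v φ : E → ℝ} {x : E} (hv : DifferentiableAt ℝ v x)
    (hφ : DifferentiableAt ℝ φ x) (hx : φ x = v x) (hle : ∀ᶠ y in 𝓝 x, φ y ≤ v y) :
    fderiv ℝ φ x = fderiv ℝ v x := by
  have hmin : IsLocalMin (fun y ↦ v y - φ y) x := hle.mono fun y hy ↦ by
    simp only [hx, sub_self, sub_nonneg, hy]
  exact (sub_eq_zero.1 (hmin.hasFDerivAt_eq_zero (hv.hasFDerivAt.sub hφ.hasFDerivAt))).symm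

end SupportParaboloid

theorem pd2_eq_fderiv_fderiv {n : ℕ} {φ : Euc n → ℝ} {y : Euc n}
    (h : DifferentiableAt ℝ (fderiv ℝ φ) y) (i j : Fin n) :
    pd2 n i j φ y = fderiv ℝ (fderiv ℝ φ) y (EuclideanSpace.single i 1)
      (EuclideanSpace.single j 1) := by
  rw [pd2, fderiv_clm_apply h (differentiableAt_const _)]
  simp

theorem dotProduct_hessM_mulVec {n : ℕ} {φ : Euc n → ℝ} {y : Euc n}
    (h : DifferentiableAt ℝ (fderiv ℝ φ) y) (d : Euc n) :
    ⇑d ⬝ᵥ (hessM n φ y *ᵥ ⇑d) = fderiv ℝ (fderiv ℝ φ) y d d := by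
  have hd : d = ∑ i, d i • EuclideanSpace.single i (1 : ℝ) := by
    simpa using ((EuclideanSpace.basisFun (Fin n) ℝ).sum_repr d).symm
  conv_rhs => rw [hd]
  simp only [dotProduct, mulVec, hessM, pd2_eq_fderiv_fderiv h, of_apply, Finset.mul_sum, map_sum,
    map_smul, _root_.sum_apply, _root_.smul_apply, smul_eq_mul]
  rw [Finset.sum_comm]
  exact Finset.sum_congr rfl fun i _ ↦ Finset.sum_congr rfl fun j _ ↦ by ring

theorem neg_mul_norm_sq_le_fderiv_fderiv_of_posSemidef {n : ℕ} {φ : Euc n → ℝ} {y : Euc n}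
    {C : ℝ} (h : DifferentiableAt ℝ (fderiv ℝ φ) y)
    (hpsd : (hessM n φ y + C • (1 : Matrix (Fin n) (Fin n) ℝ)).PosSemidef) (d : Euc n) :
    -(C * ‖d‖ ^ 2) ≤ fderiv ℝ (fderiv ℝ φ) y d d := by
  have hd : ⇑d ⬝ᵥ ⇑d = ‖d‖ ^ 2 := by
    rw [← real_inner_self_eq_norm_sq, EuclideanSpace.inner_eq_star_dotProduct, star_trivial]
  have := hpsd.dotProduct_mulVec_nonneg d
  rw [star_trivial, add_mulVec, smul_mulVec, one_mulVec, dotProduct_add, dotProduct_smul,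
    dotProduct_hessM_mulVec h, hd, smul_eq_mul] at this
  linarith

theorem isLocalSupportParaboloid_of_hessM {n : ℕ} {Ω N : Set (Euc n)} {v φ : Euc n → ℝ}
    {C : ℝ} {z : Euc n} (hN : IsOpen N) (hz : z ∈ N) (hφ : ContDiffOn ℝ 2 φ N) (hφz : φ z = v z)
    (hφv : ∀ y ∈ N ∩ Ω, φ y ≤ v y)
    (hpsd : ∀ y ∈ N, (hessM n φ y + C • (1 : Matrix (Fin n) (Fin n) ℝ)).PosSemidef) :
    IsLocalSupportParaboloid v Ω C z (fderiv ℝ φ z) := by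
  have hD2 : ∀ y ∈ N, ∀ d, -(C * ‖d‖ ^ 2) ≤ fderiv ℝ (fderiv ℝ φ) y d d := fun y hy ↦
    neg_mul_norm_sq_le_fderiv_fderiv_of_posSemidef (hφ.differentiableAt_fderiv hN hy) (hpsd y hy)
  filter_upwards [nhdsWithin_le_nhds (hφ.eventually_taylor_lower_bound hN hz hD2),
    mem_nhdsWithin_of_mem_nhds (hN.mem_nhds hz), self_mem_nhdsWithin] with y hy hyN hyΩ
  rw [← hφz]
  linarith [hφv y ⟨hyN, hyΩ⟩]

/-- Lemma 2.16: global support paraboloids from local lower support functions. -/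
theorem global_support_paraboloid
    (n : ℕ) (Ω : Set (Euc n)) (hΩopen : IsOpen Ω) (hΩconv : Convex ℝ Ω)
    (v : Euc n → ℝ) (hv : ContinuousOn v Ω) (C : ℝ)
    (hsupp : ∀ x ∈ Ω, ∃ (φ : Euc n → ℝ) (N : Set (Euc n)),
      IsOpen N ∧ x ∈ N ∧ ContDiffOn ℝ 2 φ N ∧ φ x = v x ∧
      (∀ y ∈ N ∩ Ω, φ y ≤ v y) ∧
      (∀ y ∈ N, (hessM n φ y + C • (1 : Matrix (Fin n) (Fin n) ℝ)).PosSemidef)) :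
    ∀ x₀ ∈ Ω, ∃ a : Euc n,
      (∀ x ∈ Ω, v x₀ + ⟪x - x₀, a⟫ - C / 2 * ‖x - x₀‖ ^ 2 ≤ v x) ∧
      (DifferentiableAt ℝ v x₀ → a = gradient v x₀) := by
  intro x₀ hx₀
  obtain ⟨φ₀, N₀, hN₀, hx₀N₀, hφ₀, hφ₀x₀, hφ₀v, hφ₀psd⟩ := hsupp x₀ hx₀
  refine ⟨gradient φ₀ x₀, fun x hx ↦ ?_, fun hvd ↦ ?_⟩
  · have hloc : ∀ z ∈ Ω, ∃ ℓ, IsLocalSupportParaboloid v Ω C z ℓ := fun z hz ↦ by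
      obtain ⟨φ, N, hN, hzN, hφ, hφz, hφv, hpsd⟩ := hsupp z hz
      exact ⟨_, isLocalSupportParaboloid_of_hessM hN hzN hφ hφz hφv hpsd⟩
    rw [real_inner_comm, gradient, InnerProductSpace.toDual_symm_apply]
    exact (isLocalSupportParaboloid_of_hessM hN₀ hx₀N₀ hφ₀ hφ₀x₀ hφ₀v hφ₀psd).le_of_mem_convex
      hΩconv hv hloc hx₀ hx
  · have hle : ∀ᶠ y in 𝓝 x₀, φ₀ y ≤ v y :=
      mem_of_superset ((hN₀.inter hΩopen).mem_nhds ⟨hx₀N₀, hx₀⟩) hφ₀v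
    have hφ₀d : DifferentiableAt ℝ φ₀ x₀ :=
      (hφ₀.contDiffAt (hN₀.mem_nhds hx₀N₀)).differentiableAt two_ne_zero
    rw [gradient, gradient, fderiv_eq_of_eventually_le hvd hφ₀d hφ₀x₀ hle]

end
end

section
/- Hessian bounds at a touching point of an ordered pair of support functions (claim in the regularity proof of Theorem 2.4). Fix n ≥ 2 and constants C_E ≥ 1, C_S > 0. Let φ₀ and φ₁ be C² functions defined on a neighborhood of a point x ∈ ℝⁿ such that: (a) φ₁ − φ₀ has a local maximum at x; (b) D²φ₁(x) ≥ −C_S·I; (c) there is an n×n symmetric matrix A with (1/C_E)·I ≤ A ≤ C_E·I and trace(A · D²φ₀(x)) ≤ 2C_E. Then, with C_H' := C_E²((n−1)C_S + 2), both −C_H'·I ≤ D²φ₀(x) ≤ C_H'·I and −C_H'·I ≤ D²φ₁(x) ≤ C_H'·I. -/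
/-!
At the touching point the second-derivative test for `φ₁ - φ₀` gives `D²φ₁ ≤ D²φ₀`, hence
`D²φ₀ ≥ D²φ₁ ≥ -C_S I`. In an orthonormal eigenbasis `e_k` of `D²φ₀`, with eigenvalues `λ_k` and
`a_k = ⟨e_k, A e_k⟩ ∈ [1/C_E, C_E]`, the trace condition reads `∑ a_k λ_k ≤ 2 C_E`. Since every
`λ_k ≥ -C_S`, the other `n - 1` terms contribute at least `-(n - 1) C_S C_E`, so a positive `λ_j`
satisfies `λ_j / C_E ≤ a_j λ_j ≤ 2 C_E + (n - 1) C_S C_E`, i.e. `λ_j ≤ C_H'`. The bounds for `φ₁`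
follow from `D²φ₁ ≤ D²φ₀` and `C_S ≤ C_H'`.
-/

open scoped BigOperators

noncomputable section

/-- `|D²u|(x) = max_{i,j} |D_{ij}u(x)|`. -/
def hessMax (n : ℕ) (u : Euc n → ℝ) (x : Euc n) : ℝ :=
  ⨆ i : Fin n, ⨆ j : Fin n, |pd2 n i j u x|

open Filter Topology Matrix Unitary

section Conjugation

variable {ι R : Type*} [Fintype ι] [DecidableEq ι] [CommRing R] [StarRing R]

theorem Matrix.posSemidef_conjStarAlgAut_iff [PartialOrder R] (u : unitary (Matrix ι ι R))
    (M : Matrix ι ι R) : (conjStarAlgAut R _ u M).PosSemidef ↔ M.PosSemidef := by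
  simpa using (isUnit_coe (U := star u)).posSemidef_star_left_conjugate_iff (x := M)

theorem Matrix.trace_conjStarAlgAut (u : unitary (Matrix ι ι R)) (M : Matrix ι ι R) :
    (conjStarAlgAut R _ u M).trace = M.trace := by
  rw [conjStarAlgAut_apply, trace_mul_cycle, Unitary.coe_star_mul_self, one_mul]

end Conjugation

theorem Matrix.PosSemidef.add_smul_one_of_le {ι : Type*} [DecidableEq ι] {H : Matrix ι ι ℝ}
    {c d : ℝ} (hH : (H + c • 1).PosSemidef) (hcd : c ≤ d) : (H + d • 1).PosSemidef := by
  have := hH.add (PosSemidef.one.smul (sub_nonneg.2 hcd))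
  rwa [add_assoc, ← add_smul, add_sub_cancel] at this

section TraceBound

variable {ι : Type*} [Fintype ι] [DecidableEq ι]

theorem mul_le_of_sum_mul_le {α β : ι → ℝ} {b c t : ℝ} (hc : 0 ≤ c) (hα : ∀ k, 0 ≤ α k)
    (hαb : ∀ k, α k ≤ b) (hβ : ∀ k, -c ≤ β k) (hsum : ∑ k, α k * β k ≤ t) (j : ι) :
    α j * β j ≤ t + c * b * (Fintype.card ι - 1) := by
  have hrest : -(c * b * (Fintype.card ι - 1)) ≤ ∑ k ∈ Finset.univ.erase j, α k * β k := by
    calc -(c * b * (Fintype.card ι - 1)) = ∑ k ∈ Finset.univ.erase j, -(c * b) := by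
          rw [Finset.sum_const, Finset.card_erase_of_mem (Finset.mem_univ j), Finset.card_univ,
            nsmul_eq_mul, Nat.cast_sub (Fintype.card_pos_iff.2 ⟨j⟩)]
          push_cast
          ring
      _ ≤ ∑ k ∈ Finset.univ.erase j, α k * β k := Finset.sum_le_sum fun k _ => by
          nlinarith [hα k, hαb k, hβ k]
  linarith [Finset.add_sum_erase Finset.univ (fun k => α k * β k) (Finset.mem_univ j)]

theorem Matrix.posSemidef_smul_one_sub_diagonal_of_trace_mul_le {B : Matrix ι ι ℝ} {d : ι → ℝ}
    {a b c t : ℝ} (ha : 0 < a) (hc : 0 ≤ c) (hd : (diagonal d + c • 1).PosSemidef)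
    (hBa : (B - a • 1).PosSemidef) (hBb : (b • 1 - B).PosSemidef)
    (htr : (B * diagonal d).trace ≤ t) (hK : 0 ≤ t + c * b * (Fintype.card ι - 1)) :
    (((t + c * b * (Fintype.card ι - 1)) / a) • 1 - diagonal d).PosSemidef := by
  have hdc (k : ι) : -c ≤ d k := by simpa [neg_le_iff_add_nonneg] using hd.diag_nonneg (i := k)
  have hBka (k : ι) : a ≤ B k k := by simpa using hBa.diag_nonneg (i := k)
  have hBkb (k : ι) : B k k ≤ b := by simpa using hBb.diag_nonneg (i := k)
  have hsum : ∑ k, B k k * d k ≤ t := by simpa [trace, mul_diagonal] using htr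
  rw [smul_one_eq_diagonal, diagonal_sub]
  refine PosSemidef.diagonal fun k => sub_nonneg.2 ?_
  rw [le_div_iff₀ ha]
  rcases le_or_gt (d k) 0 with hk | hk
  · nlinarith
  · calc d k * a ≤ B k k * d k := by nlinarith [hBka k]
      _ ≤ _ := mul_le_of_sum_mul_le hc (fun k => ha.le.trans (hBka k)) hBkb hdc hsum k

theorem Matrix.IsHermitian.posSemidef_smul_one_sub_of_trace_mul_le {A H : Matrix ι ι ℝ}
    {a b c t : ℝ} (hH : H.IsHermitian) (ha : 0 < a) (hc : 0 ≤ c) (hHc : (H + c • 1).PosSemidef)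
    (hAa : (A - a • 1).PosSemidef) (hAb : (b • 1 - A).PosSemidef) (htr : (A * H).trace ≤ t)
    (hK : 0 ≤ t + c * b * (Fintype.card ι - 1)) :
    (((t + c * b * (Fintype.card ι - 1)) / a) • 1 - H).PosSemidef := by
  have hφH : conjStarAlgAut ℝ _ (star hH.eigenvectorUnitary) H = diagonal hH.eigenvalues := by
    rw [hH.conjStarAlgAut_star_eigenvectorUnitary, RCLike.ofReal_real_eq_id, Function.id_comp]
  rw [← posSemidef_conjStarAlgAut_iff (star hH.eigenvectorUnitary)] at hHc hAa hAb ⊢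
  rw [← trace_conjStarAlgAut (star hH.eigenvectorUnitary), map_mul] at htr
  simp only [map_sub, map_add, map_smul, map_one, hφH] at hHc hAa hAb htr ⊢
  exact posSemidef_smul_one_sub_diagonal_of_trace_mul_le ha hc hHc hAa hAb htr hK

end TraceBound

section SecondDerivativeTest

theorem IsLocalMax.deriv_deriv_nonpos {f : ℝ → ℝ} {a : ℝ} (h : IsLocalMax f a)
    (hc : ContinuousAt f a) : deriv (deriv f) a ≤ 0 := by
  by_contra! hpos
  -- the test only yields a non-strict minimum; together with the maximum it makes `f` locally
  -- constant near `a`, so `f'' a = 0`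
  have hmin : IsLocalMin f a := isLocalMin_of_deriv_deriv_pos hpos h.deriv_eq_zero hc
  have hconst : f =ᶠ[𝓝 a] fun _ => f a := (hmin.and h).mono fun y hy => le_antisymm hy.2 hy.1
  have : deriv f =ᶠ[𝓝 a] fun _ => 0 := by simpa using hconst.deriv
  simp [this.deriv_eq] at hpos

variable {E : Type*} [NormedAddCommGroup E] [NormedSpace ℝ E] {g : E → ℝ} {x : E}

theorem deriv_deriv_comp_add_smul (hg : ContDiffAt ℝ 2 g x) (w : E) :
    deriv (deriv fun t : ℝ => g (x + t • w)) 0 = fderiv ℝ (fderiv ℝ g) x w w := by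
  have hline (t : ℝ) : HasDerivAt (fun t : ℝ => x + t • w) w t := by
    simpa using ((hasDerivAt_id t).smul_const w).const_add x
  have hderiv : deriv (fun t : ℝ => g (x + t • w)) =ᶠ[𝓝 0] fun t => fderiv ℝ g (x + t • w) w := by
    have hline_tendsto : Tendsto (fun t : ℝ => x + t • w) (𝓝 0) (𝓝 x) := by
      simpa using (hline 0).continuousAt.tendsto
    filter_upwards [hline_tendsto.eventually (hg.eventually (by simp))] with t ht
    exact ((ht.differentiableAt two_ne_zero).hasFDerivAt.comp_hasDerivAt t (hline t)).deriv
  have hg' : HasFDerivAt (fderiv ℝ g) (fderiv ℝ (fderiv ℝ g) x) (x + (0 : ℝ) • w) := by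
    simpa using ((hg.fderiv_right (m := 1) le_rfl).differentiableAt one_ne_zero).hasFDerivAt
  rw [hderiv.deriv_eq]
  exact ((ContinuousLinearMap.apply ℝ ℝ w).hasFDerivAt.comp_hasDerivAt 0
    (hg'.comp_hasDerivAt 0 (hline 0))).deriv

theorem IsLocalMax.fderiv_fderiv_apply_self_nonpos (h : IsLocalMax g x) (hg : ContDiffAt ℝ 2 g x)
    (w : E) : fderiv ℝ (fderiv ℝ g) x w w ≤ 0 := by
  have hline : Continuous fun t : ℝ => x + t • w := by fun_prop
  rw [← deriv_deriv_comp_add_smul hg w]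
  refine IsLocalMax.deriv_deriv_nonpos ?_ ?_
  · exact IsLocalMax.comp_continuous (by rwa [zero_smul, add_zero]) hline.continuousAt
  · exact hg.continuousAt.comp_of_eq hline.continuousAt (by simp)

theorem fderiv_fderiv_sub {g₀ g₁ : E → ℝ} (h₀ : ContDiffAt ℝ 2 g₀ x) (h₁ : ContDiffAt ℝ 2 g₁ x) :
    fderiv ℝ (fderiv ℝ fun y => g₁ y - g₀ y) x
      = fderiv ℝ (fderiv ℝ g₁) x - fderiv ℝ (fderiv ℝ g₀) x := by
  have hfderiv : (fderiv ℝ fun y => g₁ y - g₀ y) =ᶠ[𝓝 x] fderiv ℝ g₁ - fderiv ℝ g₀ := by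
    filter_upwards [h₀.eventually (by simp), h₁.eventually (by simp)] with y hy₀ hy₁
    exact fderiv_sub (hy₁.differentiableAt two_ne_zero) (hy₀.differentiableAt two_ne_zero)
  rw [hfderiv.fderiv_eq]
  exact fderiv_sub ((h₁.fderiv_right (m := 1) le_rfl).differentiableAt one_ne_zero)
    ((h₀.fderiv_right (m := 1) le_rfl).differentiableAt one_ne_zero)

end SecondDerivativeTest

section Hessian

variable {n : ℕ} {u : Euc n → ℝ} {x : Euc n}

theorem pd2_eq_fderiv_fderiv_s14 (hu : ContDiffAt ℝ 2 u x) (i j : Fin n) :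
    pd2 n i j u x
      = fderiv ℝ (fderiv ℝ u) x (EuclideanSpace.single i 1) (EuclideanSpace.single j 1) := by
  have hd : DifferentiableAt ℝ (fderiv ℝ u) x :=
    (hu.fderiv_right (m := 1) le_rfl).differentiableAt one_ne_zero
  rw [pd2, fderiv_clm_apply hd (differentiableAt_const _)]
  simp

theorem isHermitian_hessM (hu : ContDiffAt ℝ 2 u x) : (hessM n u x).IsHermitian := by
  ext i j
  simpa [hessM, pd2_eq_fderiv_fderiv_s14 hu] using hu.isSymmSndFDerivAt (by simp) _ _

theorem dotProduct_hessM_mulVec_s14 (hu : ContDiffAt ℝ 2 u x) (v : Fin n → ℝ) :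
    v ⬝ᵥ hessM n u x *ᵥ v = fderiv ℝ (fderiv ℝ u) x (WithLp.toLp 2 v) (WithLp.toLp 2 v) := by
  have hv : WithLp.toLp 2 v = ∑ i, v i • EuclideanSpace.single i (1 : ℝ) := by
    ext k
    simp [Pi.single_apply]
  simp only [hv, map_sum, map_smul, _root_.sum_apply, _root_.smul_apply,
    smul_eq_mul, dotProduct, mulVec, hessM, of_apply, pd2_eq_fderiv_fderiv_s14 hu, Finset.mul_sum]
  rw [Finset.sum_comm]
  congr 1; ext i; congr 1; ext j; ring

theorem hessM_sub {φ₀ φ₁ : Euc n → ℝ} (h₀ : ContDiffAt ℝ 2 φ₀ x) (h₁ : ContDiffAt ℝ 2 φ₁ x) :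
    hessM n (fun y => φ₁ y - φ₀ y) x = hessM n φ₁ x - hessM n φ₀ x := by
  ext i j
  simp [hessM, pd2_eq_fderiv_fderiv_s14, h₀, h₁, h₁.sub h₀, fderiv_fderiv_sub h₀ h₁]

theorem IsLocalMax.posSemidef_neg_hessM (h : IsLocalMax u x) (hu : ContDiffAt ℝ 2 u x) :
    (-hessM n u x).PosSemidef := by
  refine .of_dotProduct_mulVec_nonneg (isHermitian_hessM hu).neg fun v => ?_
  simpa [neg_mulVec, dotProduct_neg, dotProduct_hessM_mulVec_s14 hu] using
    h.fderiv_fderiv_apply_self_nonpos hu (WithLp.toLp 2 v)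

end Hessian

/-- Hessian bounds at a touching point of an ordered pair of support functions
(claim in the regularity proof of Theorem 2.4). -/
theorem hessian_bounds_at_touching_point
    (n : ℕ) (hn : 2 ≤ n) (CE CS : ℝ) (hCE : 1 ≤ CE) (hCS : 0 < CS)
    (x : Euc n) (φ₀ φ₁ : Euc n → ℝ)
    (hφ₀ : ContDiffAt ℝ 2 φ₀ x) (hφ₁ : ContDiffAt ℝ 2 φ₁ x)
    (hmax : IsLocalMax (fun y => φ₁ y - φ₀ y) x)
    (hhess₁ : (hessM n φ₁ x + CS • (1 : Matrix (Fin n) (Fin n) ℝ)).PosSemidef)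
    (hA : ∃ A : Matrix (Fin n) (Fin n) ℝ, A.IsSymm ∧
      (A - (1 / CE) • (1 : Matrix (Fin n) (Fin n) ℝ)).PosSemidef ∧
      (CE • (1 : Matrix (Fin n) (Fin n) ℝ) - A).PosSemidef ∧
      (A * hessM n φ₀ x).trace ≤ 2 * CE) :
    ((CE ^ 2 * (((n : ℝ) - 1) * CS + 2)) • (1 : Matrix (Fin n) (Fin n) ℝ)
        - hessM n φ₀ x).PosSemidef ∧
    (hessM n φ₀ x + (CE ^ 2 * (((n : ℝ) - 1) * CS + 2)) •
        (1 : Matrix (Fin n) (Fin n) ℝ)).PosSemidef ∧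
    ((CE ^ 2 * (((n : ℝ) - 1) * CS + 2)) • (1 : Matrix (Fin n) (Fin n) ℝ)
        - hessM n φ₁ x).PosSemidef ∧
    (hessM n φ₁ x + (CE ^ 2 * (((n : ℝ) - 1) * CS + 2)) •
        (1 : Matrix (Fin n) (Fin n) ℝ)).PosSemidef := by
  obtain ⟨A, -, hA₁, hA₂, htr⟩ := hA
  have hn₁ : (1 : ℝ) ≤ n - 1 := by
    have : (2 : ℝ) ≤ n := by exact_mod_cast hn
    linarith
  have hCS_le : CS ≤ CE ^ 2 * (((n : ℝ) - 1) * CS + 2) :=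
    calc CS ≤ ((n : ℝ) - 1) * CS + 2 := by nlinarith
      _ ≤ _ := le_mul_of_one_le_left (by positivity) (one_le_pow₀ hCE)
  have hdiff : (hessM n φ₀ x - hessM n φ₁ x).PosSemidef := by
    simpa [hessM_sub hφ₀ hφ₁] using hmax.posSemidef_neg_hessM (hφ₁.sub hφ₀)
  have hlow₀ : (hessM n φ₀ x + CS • 1).PosSemidef := by
    convert hdiff.add hhess₁ using 1
    abel
  have hup₀ : ((CE ^ 2 * (((n : ℝ) - 1) * CS + 2)) • 1 - hessM n φ₀ x).PosSemidef := by
    have hK : 0 ≤ 2 * CE + CS * CE * (Fintype.card (Fin n) - 1) := by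
      rw [Fintype.card_fin]
      positivity
    convert (isHermitian_hessM hφ₀).posSemidef_smul_one_sub_of_trace_mul_le (by positivity)
      hCS.le hlow₀ hA₁ hA₂ htr hK using 3
    rw [Fintype.card_fin]
    field_simp
    ring
  exact ⟨hup₀, hlow₀.add_smul_one_of_le hCS_le, by simpa using hup₀.add hdiff,
    hhess₁.add_smul_one_of_le hCS_le⟩

end
end
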